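/- (Brezis–Gallouët-type bound via Fourier series) Let v be a zero-mean function on the 2-torus with ‖∇v‖_{L²} ≤ 1 and ‖Δv‖_{L²} < ∞. Then Σ_{k≠0} |v̂_k| ≤ C (1 + (log max(‖Δv‖_{L²}, 2))^{1/2}) for an absolute constant C. -/

import Mathlib

open Real Complex

/-- `|k| = √(k₁² + k₂²)` for a lattice point `k ∈ ℤ²`. -/
noncomputable def latticeMag (k : ℤ × ℤ) : ℝ :=
  Real.sqrt ((k.1 : ℝ) ^ 2 + (k.2 : ℝ) ^ 2)

/-!
Cauchy–Schwarz against the weight `ω_R(k) = |k|² + |k|⁴ / R²`, with `R = max(‖Δv‖₂, 2)`, gives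
`∑ |v̂_k| ≤ (∑ ω_R(k)⁻¹)^{1/2} (∑ ω_R(k) |v̂_k|²)^{1/2}`. The second factor is at most
`(‖∇v‖₂² + ‖Δv‖₂² / R²)^{1/2} / (2π) ≤ √2 / (2π)`. In the first, `ω_R(k)⁻¹ ≤ ‖k‖_∞⁻²` on the box
`‖k‖_∞ ≤ N := ⌈R²⌉`, where the `8n` lattice points of each shell `‖k‖_∞ = n` contribute `8 / n`,
so `8 H_N ≤ 8 (1 + 3 log R)` in all; outside it `ω_R(k)⁻¹ ≤ R² ‖k‖_∞⁻⁴ ≤ ‖k‖_∞⁻³`, which is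
summable on `ℤ²`.
-/

theorem Real.tsum_mul_le_sqrt_mul_sqrt {ι : Type*} {f g : ι → ℝ}
    (hf : Summable fun i ↦ f i ^ 2) (hg : Summable fun i ↦ g i ^ 2) :
    ∑' i, f i * g i ≤ √(∑' i, f i ^ 2) * √(∑' i, g i ^ 2) :=
  tsum_le_of_sum_le' (by positivity) fun s ↦ (Real.sum_mul_le_sqrt_mul_sqrt s f g).trans <|
    mul_le_mul
      (Real.sqrt_le_sqrt (hf.sum_le_tsum s fun i _ ↦ sq_nonneg (f i)))
      (Real.sqrt_le_sqrt (hg.sum_le_tsum s fun i _ ↦ sq_nonneg (g i)))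
      (Real.sqrt_nonneg _) (Real.sqrt_nonneg _)

theorem Real.tsum_le_sqrt_tsum_inv_mul_sqrt_tsum_mul {ι : Type*} {a ω : ι → ℝ}
    (ha : ∀ i, 0 ≤ a i) (hω : ∀ i, 0 ≤ ω i) (hzero : ∀ i, ω i = 0 → a i = 0)
    (hω_inv : Summable fun i ↦ (ω i)⁻¹) (hωa : Summable fun i ↦ ω i * a i ^ 2) :
    ∑' i, a i ≤ √(∑' i, (ω i)⁻¹) * √(∑' i, ω i * a i ^ 2) := by
  have hfactor : ∀ i, a i = √(ω i)⁻¹ * √(ω i * a i ^ 2) := by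
    intro i
    rcases (hω i).eq_or_lt with h | h
    · simp [hzero i h.symm]
    · rw [← Real.sqrt_mul (inv_nonneg.2 h.le), inv_mul_cancel_left₀ h.ne',
        Real.sqrt_sq (ha i)]
  have hsq_inv : (fun i ↦ √(ω i)⁻¹ ^ 2) = fun i ↦ (ω i)⁻¹ :=
    funext fun i ↦ Real.sq_sqrt (inv_nonneg.2 (hω i))
  have hsq_mul : (fun i ↦ √(ω i * a i ^ 2) ^ 2) = fun i ↦ ω i * a i ^ 2 :=
    funext fun i ↦ Real.sq_sqrt (by have := hω i; positivity)
  calc ∑' i, a i = ∑' i, √(ω i)⁻¹ * √(ω i * a i ^ 2) := tsum_congr hfactor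
    _ ≤ _ := by
      have := Real.tsum_mul_le_sqrt_mul_sqrt (hsq_inv ▸ hω_inv) (hsq_mul ▸ hωa)
      rwa [hsq_inv, hsq_mul] at this

theorem Real.sqrt_add_mul_le {A B x : ℝ} (hA : 0 ≤ A) (hB : 0 ≤ B) (hx : 0 ≤ x) :
    √(A + B * x) ≤ √(A + B) * (1 + √x) := by
  rw [← Real.sqrt_sq (by positivity : 0 ≤ 1 + √x), ← Real.sqrt_mul (by positivity)]
  refine Real.sqrt_le_sqrt ?_
  nlinarith [Real.sq_sqrt hx, Real.sqrt_nonneg x, mul_nonneg hA (Real.sqrt_nonneg x),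
    mul_nonneg hB (Real.sqrt_nonneg x)]

theorem harmonic_ceil_sq_le {R : ℝ} (hR : 2 ≤ R) :
    (harmonic ⌈R ^ 2⌉₊ : ℝ) ≤ 1 + 3 * Real.log R := by
  have hN : R ^ 2 ≤ ⌈R ^ 2⌉₊ := Nat.le_ceil _
  have hN' : (⌈R ^ 2⌉₊ : ℝ) < R ^ 2 + 1 := Nat.ceil_lt_add_one (by positivity)
  have hlog : Real.log ⌈R ^ 2⌉₊ ≤ Real.log 2 + 2 * Real.log R := by
    rw [← Real.log_rpow (by linarith), ← Real.log_mul (by norm_num) (by positivity)]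
    exact Real.log_le_log (by nlinarith) (by norm_num; nlinarith)
  have hlog2 : Real.log 2 ≤ Real.log R := Real.log_le_log (by norm_num) hR
  linarith [harmonic_le_one_add_log ⌈R ^ 2⌉₊]

namespace Int

theorem prod_norm_eq_max_natAbs (k : ℤ × ℤ) : ‖k‖ = (max k.1.natAbs k.2.natAbs : ℕ) := by
  simp [Prod.norm_def, Int.norm_eq_abs, Nat.cast_max]

theorem norm_eq_of_mem_box {k : ℤ × ℤ} {n : ℕ} (hk : k ∈ Finset.box n) : ‖k‖ = n := by
  rw [prod_norm_eq_max_natAbs, mem_box.1 hk]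

theorem prod_mem_Icc_neg_iff {k : ℤ × ℤ} {N : ℕ} :
    k ∈ Finset.Icc (-N : ℤ × ℤ) N ↔ max k.1.natAbs k.2.natAbs ≤ N := by
  simp only [Finset.mem_Icc, Prod.le_def, Prod.fst_neg, Prod.snd_neg, Prod.fst_natCast,
    Prod.snd_natCast]
  omega

theorem natCast_add_one_le_norm_of_notMem_Icc {k : ℤ × ℤ} {N : ℕ}
    (hk : k ∉ Finset.Icc (-N : ℤ × ℤ) N) : (N : ℝ) + 1 ≤ ‖k‖ := by
  rw [prod_mem_Icc_neg_iff, not_le] at hk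
  rw [prod_norm_eq_max_natAbs]
  exact_mod_cast hk

-- The `k = 0` term is `0⁻¹ = 0`.
theorem sum_Icc_inv_norm_sq (N : ℕ) :
    ∑ k ∈ Finset.Icc (-N : ℤ × ℤ) N, (‖k‖ ^ 2)⁻¹ = 8 * (harmonic N : ℝ) := by
  induction N with
  | zero => simp
  | succ n ih =>
    rw [← Finset.box_succ_disjUnion, Finset.sum_disjUnion, ih,
      Finset.sum_congr rfl fun k hk ↦ by rw [norm_eq_of_mem_box hk], Finset.sum_const,
      card_box n.succ_ne_zero, harmonic_succ]
    push_cast [Nat.succ_eq_add_one, nsmul_eq_mul]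
    field_simp
    ring

theorem summable_inv_norm_pow {p : ℕ} (hp : 2 < p) :
    Summable fun k : ℤ × ℤ ↦ (‖k‖ ^ p)⁻¹ := by
  refine ((finTwoArrowEquiv ℤ).symm.summable_iff.2
    (EisensteinSeries.summable_one_div_norm_rpow (k := p) (by exact_mod_cast hp))).congr
    fun k ↦ ?_
  simp [EisensteinSeries.norm_eq_max_natAbs, prod_norm_eq_max_natAbs, Real.rpow_neg]

end Int

theorem latticeMag_zero : latticeMag 0 = 0 := by simp [latticeMag]

theorem norm_le_latticeMag (k : ℤ × ℤ) : ‖k‖ ≤ latticeMag k := by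
  rw [Prod.norm_def, Int.norm_eq_abs, Int.norm_eq_abs]
  exact max_le (Real.abs_le_sqrt (by nlinarith)) (Real.abs_le_sqrt (by nlinarith))

theorem latticeMag_pos {k : ℤ × ℤ} (hk : k ≠ 0) : 0 < latticeMag k :=
  (norm_pos_iff.2 hk).trans_le (norm_le_latticeMag k)

theorem inv_latticeMag_pow_le (k : ℤ × ℤ) (n : ℕ) : (latticeMag k ^ n)⁻¹ ≤ (‖k‖ ^ n)⁻¹ := by
  rcases eq_or_ne k 0 with rfl | hk
  · simp [latticeMag_zero]
  · exact inv_anti₀ (pow_pos (norm_pos_iff.2 hk) n)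
      (pow_le_pow_left₀ (norm_nonneg k) (norm_le_latticeMag k) n)

theorem summable_and_tsum_le_of_le_inv_latticeMag_sq_of_le_inv_latticeMag_pow_four
    {F : ℤ × ℤ → ℝ} {M : ℝ} (hM : 0 ≤ M) (hF : ∀ k, 0 ≤ F k)
    (h2 : ∀ k, F k ≤ (latticeMag k ^ 2)⁻¹) (h4 : ∀ k, F k ≤ M * (latticeMag k ^ 4)⁻¹) (N : ℕ) :
    Summable F ∧
      ∑' k, F k ≤ 8 * harmonic N + M / (N + 1) * ∑' k : ℤ × ℤ, (‖k‖ ^ 3)⁻¹ := by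
  set S := Finset.Icc (-N : ℤ × ℤ) N
  have hcube := Int.summable_inv_norm_pow (p := 3) (by norm_num)
  have hlow : Summable fun k ↦ if k ∈ S then (‖k‖ ^ 2)⁻¹ else 0 :=
    summable_of_ne_finset_zero (s := S) fun k hk ↦ if_neg hk
  have hbound : ∀ k, F k ≤ (if k ∈ S then (‖k‖ ^ 2)⁻¹ else 0) + M / (N + 1) * (‖k‖ ^ 3)⁻¹ := by
    intro k
    by_cases hk : k ∈ S
    · rw [if_pos hk]
      have := (h2 k).trans (inv_latticeMag_pow_le k 2)
      have : 0 ≤ M / (N + 1) * (‖k‖ ^ 3)⁻¹ := by positivity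
      linarith
    · have hN := Int.natCast_add_one_le_norm_of_notMem_Icc hk
      have hk0 : 0 < ‖k‖ := by linarith [(N.cast_nonneg : (0 : ℝ) ≤ N)]
      rw [if_neg hk, zero_add]
      calc F k ≤ M * (‖k‖ ^ 4)⁻¹ :=
            (h4 k).trans (mul_le_mul_of_nonneg_left (inv_latticeMag_pow_le k 4) hM)
        _ = M * ‖k‖⁻¹ * (‖k‖ ^ 3)⁻¹ := by ring
        _ ≤ M * ((N : ℝ) + 1)⁻¹ * (‖k‖ ^ 3)⁻¹ := by gcongr
        _ = M / (N + 1) * (‖k‖ ^ 3)⁻¹ := by ring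
  have hsum := hlow.add (hcube.mul_left (M / (N + 1)))
  refine ⟨hsum.of_nonneg_of_le hF hbound, ?_⟩
  calc ∑' k, F k ≤ ∑' k, ((if k ∈ S then (‖k‖ ^ 2)⁻¹ else 0) + M / (N + 1) * (‖k‖ ^ 3)⁻¹) :=
        (hsum.of_nonneg_of_le hF hbound).tsum_le_tsum hbound hsum
    _ = 8 * harmonic N + M / (N + 1) * ∑' k : ℤ × ℤ, (‖k‖ ^ 3)⁻¹ := by
      rw [hlow.tsum_add (hcube.mul_left _), tsum_mul_left, tsum_eq_sum fun k hk ↦ if_neg hk,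
        Finset.sum_ite_of_true fun k hk ↦ hk, Int.sum_Icc_inv_norm_sq]

noncomputable def splitWeight (R : ℝ) (k : ℤ × ℤ) : ℝ := latticeMag k ^ 2 + latticeMag k ^ 4 / R ^ 2

theorem splitWeight_nonneg (R : ℝ) (k : ℤ × ℤ) : 0 ≤ splitWeight R k := by
  unfold splitWeight; positivity

theorem splitWeight_pos (R : ℝ) {k : ℤ × ℤ} (hk : k ≠ 0) : 0 < splitWeight R k := by
  have := latticeMag_pos hk
  unfold splitWeight; positivity

theorem summable_inv_splitWeight_and_tsum_le {R : ℝ} (hR : 2 ≤ R) :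
    Summable (fun k ↦ (splitWeight R k)⁻¹) ∧
      ∑' k, (splitWeight R k)⁻¹ ≤ 8 * (1 + 3 * Real.log R) + ∑' k : ℤ × ℤ, (‖k‖ ^ 3)⁻¹ := by
  have h2 : ∀ k, (splitWeight R k)⁻¹ ≤ (latticeMag k ^ 2)⁻¹ := by
    intro k
    rcases eq_or_ne k 0 with rfl | hk
    · simp [splitWeight, latticeMag_zero]
    · exact inv_anti₀ (pow_pos (latticeMag_pos hk) 2)
        (le_add_of_nonneg_right (by positivity))
  have h4 : ∀ k, (splitWeight R k)⁻¹ ≤ R ^ 2 * (latticeMag k ^ 4)⁻¹ := by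
    intro k
    rcases eq_or_ne k 0 with rfl | hk
    · simp [splitWeight, latticeMag_zero]
    · rw [← div_eq_mul_inv, ← inv_div]
      exact inv_anti₀ (by have := latticeMag_pos hk; positivity)
        (le_add_of_nonneg_left (by positivity))
  obtain ⟨hsum, hle⟩ := summable_and_tsum_le_of_le_inv_latticeMag_sq_of_le_inv_latticeMag_pow_four
    (by positivity) (fun k ↦ inv_nonneg.2 (splitWeight_nonneg R k)) h2 h4 ⌈R ^ 2⌉₊
  refine ⟨hsum, hle.trans ?_⟩
  have hratio : R ^ 2 / (⌈R ^ 2⌉₊ + 1) ≤ 1 :=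
    (div_le_one (by positivity)).2 ((Nat.le_ceil _).trans (le_add_of_nonneg_right zero_le_one))
  have hT : 0 ≤ ∑' k : ℤ × ℤ, (‖k‖ ^ 3)⁻¹ := tsum_nonneg fun k ↦ by positivity
  gcongr
  · exact harmonic_ceil_sq_le hR
  · exact mul_le_of_le_one_left hT hratio

theorem summable_splitWeight_mul_sq_and_tsum_le {a : ℤ × ℤ → ℝ} {R : ℝ} (hR : 0 < R)
    (h2 : Summable fun k ↦ latticeMag k ^ 2 * a k ^ 2)
    (h4 : Summable fun k ↦ latticeMag k ^ 4 * a k ^ 2)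
    (hgrad : (2 * π) * √(∑' k, latticeMag k ^ 2 * a k ^ 2) ≤ 1)
    (hlap : (2 * π) * √(∑' k, latticeMag k ^ 4 * a k ^ 2) ≤ R) :
    Summable (fun k ↦ splitWeight R k * a k ^ 2) ∧
      ∑' k, splitWeight R k * a k ^ 2 ≤ 2 / (2 * π) ^ 2 := by
  have hsplit : (fun k ↦ splitWeight R k * a k ^ 2) =
      fun k ↦ latticeMag k ^ 2 * a k ^ 2 + latticeMag k ^ 4 * a k ^ 2 / R ^ 2 := by
    ext k; unfold splitWeight; ring
  have hpi : 0 < 2 * π := by positivity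
  have hG : ∑' k, latticeMag k ^ 2 * a k ^ 2 ≤ (1 / (2 * π)) ^ 2 :=
    (Real.sqrt_le_left (by positivity)).1 ((le_div_iff₀ hpi).2 (by linarith))
  have hD : ∑' k, latticeMag k ^ 4 * a k ^ 2 ≤ (R / (2 * π)) ^ 2 :=
    (Real.sqrt_le_left (by positivity)).1 ((le_div_iff₀ hpi).2 (by linarith))
  rw [hsplit]
  refine ⟨h2.add (h4.div_const _), ?_⟩
  calc ∑' k, (latticeMag k ^ 2 * a k ^ 2 + latticeMag k ^ 4 * a k ^ 2 / R ^ 2)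
      = ∑' k, latticeMag k ^ 2 * a k ^ 2 + (∑' k, latticeMag k ^ 4 * a k ^ 2) / R ^ 2 := by
        rw [h2.tsum_add (h4.div_const _), tsum_div_const]
    _ ≤ (1 / (2 * π)) ^ 2 + (R / (2 * π)) ^ 2 / R ^ 2 := by gcongr
    _ = 2 / (2 * π) ^ 2 := by field_simp; ring

/-- Brezis–Gallouët-type bound on the 2-torus via Fourier series:
if `‖∇v‖₂ ≤ 1` then `∑_{k≠0} |v̂_k| ≤ C (1 + (log max(‖Δv‖₂, 2))^{1/2})`,
with `‖∇v‖₂² = (2π)² ∑ |k|²|v̂_k|²` and `‖Δv‖₂² = (2π)² ∑ |k|⁴|v̂_k|²`. -/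
theorem brezis_gallouet_fourier_bound :
    ∃ C : ℝ, 0 < C ∧ ∀ vh : ℤ × ℤ → ℂ, vh 0 = 0 →
      (Summable fun k : ℤ × ℤ => latticeMag k ^ 2 * ‖vh k‖ ^ 2) →
      (Summable fun k : ℤ × ℤ => latticeMag k ^ 4 * ‖vh k‖ ^ 2) →
      (2 * π) * Real.sqrt (∑' k : ℤ × ℤ, latticeMag k ^ 2 * ‖vh k‖ ^ 2) ≤ 1 →
      ∑' k : ℤ × ℤ, ‖vh k‖ ≤
        C * (1 + Real.sqrt (Real.log
          (max ((2 * π) * Real.sqrt (∑' k : ℤ × ℤ, latticeMag k ^ 4 * ‖vh k‖ ^ 2)) 2))) := by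
  set T := ∑' k : ℤ × ℤ, (‖k‖ ^ 3)⁻¹
  have hT : 0 ≤ T := tsum_nonneg fun k ↦ by positivity
  refine ⟨√2 * √(32 + T) / (2 * π), by positivity, fun vh h0 hS2 hS4 hgrad ↦ ?_⟩
  set R := max ((2 * π) * √(∑' k : ℤ × ℤ, latticeMag k ^ 4 * ‖vh k‖ ^ 2)) 2
  have hR : 2 ≤ R := le_max_right _ _
  have hlogR : 0 ≤ Real.log R := Real.log_nonneg (by linarith)
  obtain ⟨hinv_sum, hinv⟩ := summable_inv_splitWeight_and_tsum_le hR
  obtain ⟨henergy_sum, henergy⟩ := summable_splitWeight_mul_sq_and_tsum_le (a := fun k ↦ ‖vh k‖)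
    (by linarith) hS2 hS4 hgrad (le_max_left _ _)
  have hzero : ∀ k, splitWeight R k = 0 → ‖vh k‖ = 0 := fun k hk ↦ by
    rcases eq_or_ne k 0 with rfl | hk0
    · rw [h0, norm_zero]
    · exact absurd hk (splitWeight_pos R hk0).ne'
  have hsqrt := Real.sqrt_add_mul_le (A := 8 + T) (B := 24) (by positivity) (by norm_num) hlogR
  rw [show 8 + T + 24 = 32 + T by ring] at hsqrt
  calc ∑' k, ‖vh k‖
      ≤ √(∑' k, (splitWeight R k)⁻¹) * √(∑' k, splitWeight R k * ‖vh k‖ ^ 2) :=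
        Real.tsum_le_sqrt_tsum_inv_mul_sqrt_tsum_mul (fun _ ↦ norm_nonneg _)
          (splitWeight_nonneg R) hzero hinv_sum henergy_sum
    _ ≤ √(8 + T + 24 * Real.log R) * √(2 / (2 * π) ^ 2) := by
        gcongr
        linarith
    _ ≤ √(32 + T) * (1 + √(Real.log R)) * (√2 / (2 * π)) := by
        rw [Real.sqrt_div' _ (sq_nonneg _), Real.sqrt_sq (by positivity)]
        gcongr
    _ = √2 * √(32 + T) / (2 * π) * (1 + √(Real.log R)) := by ring
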